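/- Under the admissible constraints 0 < λ < 1/2, 0 < α₁ < 1−2λ, 1−2λ < α₂ < 1, and δ₁, δ₂ > 0, with ℓ₁ = 1−2λ−α₁ and ℓ₂ = 2λ+α₂−1, the inequality (λ+α₁)δ₁ℓ₂H₁(λ,α₁,α₂) − (λ+α₂)δ₂ℓ₁H₂(λ,α₁,α₂) < 0 holds, where H₁ = −λ+2α₂+λα₁−8λα₂−2α₁α₂−2α₂² and H₂ = λ−2α₁+8λα₁−λα₂+2α₁α₂+2α₁². -/

import Mathlib

/-!
Both brackets are values of one polynomial `H`: the paper's `H₂` is `H λ α₁ α₂` and its `H₁` is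
`-H λ α₂ α₁`. Since `H λ a b = 4λa + λ(1 - b) + 2a(2λ + a + b - 1)`, `H` is positive as soon as
`λ, a > 0`, `b ≤ 1` and `2λ + a + b ≥ 1`, which the constraints give for both orders of `α₁, α₂`.
The left-hand side is then minus a sum of two products of positive factors.
-/

def H (lam a b : ℝ) : ℝ := lam - 2*a + 8*lam*a - lam*b + 2*a*b + 2*a^2

theorem H_pos {lam a b : ℝ} (hlam : 0 < lam) (ha : 0 < a) (hb : b ≤ 1)
    (hsum : 1 ≤ 2*lam + a + b) : 0 < H lam a b := by
  have hH : H lam a b = 4*lam*a + lam*(1 - b) + 2*a*(2*lam + a + b - 1) := by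
    unfold H; ring
  rw [hH]
  have : 0 ≤ lam*(1 - b) := mul_nonneg hlam.le (by linarith)
  have : 0 ≤ 2*a*(2*lam + a + b - 1) := mul_nonneg (by positivity) (by linarith)
  linarith [mul_pos hlam ha]

theorem stmt_15_general (δ₁ δ₂ lam α₁ α₂ : ℝ)
    (hδ₁ : 0 < δ₁) (hδ₂ : 0 < δ₂)
    (hlam : 0 < lam)
    (hα₁ : 0 < α₁) (hα₁' : α₁ < 1 - 2*lam)
    (hα₂ : 1 - 2*lam < α₂) (hα₂' : α₂ < 1) :
    (lam + α₁) * δ₁ * (2*lam + α₂ - 1) *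
      (-lam + 2*α₂ + lam*α₁ - 8*lam*α₂ - 2*α₁*α₂ - 2*α₂^2)
    - (lam + α₂) * δ₂ * (1 - 2*lam - α₁) *
      (lam - 2*α₁ + 8*lam*α₁ - lam*α₂ + 2*α₁*α₂ + 2*α₁^2) < 0 := by
  have hH₁ : 0 < H lam α₂ α₁ := H_pos hlam (by linarith) (by linarith) (by linarith)
  have hH₂ : 0 < H lam α₁ α₂ := H_pos hlam hα₁ hα₂'.le (by linarith)
  have hℓ₁ : 0 < 1 - 2*lam - α₁ := by linarith
  have hℓ₂ : 0 < 2*lam + α₂ - 1 := by linarith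
  have hα₂pos : 0 < α₂ := by linarith
  have hsplit : (lam + α₁) * δ₁ * (2*lam + α₂ - 1) *
      (-lam + 2*α₂ + lam*α₁ - 8*lam*α₂ - 2*α₁*α₂ - 2*α₂^2)
    - (lam + α₂) * δ₂ * (1 - 2*lam - α₁) *
      (lam - 2*α₁ + 8*lam*α₁ - lam*α₂ + 2*α₁*α₂ + 2*α₁^2)
      = -((lam + α₁) * δ₁ * (2*lam + α₂ - 1) * H lam α₂ α₁
          + (lam + α₂) * δ₂ * (1 - 2*lam - α₁) * H lam α₁ α₂) := by
    unfold H; ring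
  rw [hsplit, neg_lt_zero]
  positivity

theorem stmt_15 (δ₁ δ₂ lam α₁ α₂ : ℝ)
    (hδ₁ : 0 < δ₁) (hδ₂ : 0 < δ₂)
    (hlam : 0 < lam) (hlam' : lam < 1/2)
    (hα₁ : 0 < α₁) (hα₁' : α₁ < 1 - 2*lam)
    (hα₂ : 1 - 2*lam < α₂) (hα₂' : α₂ < 1) :
    (lam + α₁) * δ₁ * (2*lam + α₂ - 1) *
      (-lam + 2*α₂ + lam*α₁ - 8*lam*α₂ - 2*α₁*α₂ - 2*α₂^2)
    - (lam + α₂) * δ₂ * (1 - 2*lam - α₁) *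
      (lam - 2*α₁ + 8*lam*α₁ - lam*α₂ + 2*α₁*α₂ + 2*α₁^2) < 0 :=
  stmt_15_general δ₁ δ₂ lam α₁ α₂ hδ₁ hδ₂ hlam hα₁ hα₁' hα₂ hα₂'
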